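/- Let α > 0 and let z ∈ ℂ be such that z is not of the form −1 + iy with y ∈ ℝ and |y| ≥ 2α. Then the function χ_α is complex differentiable at z with derivative χ_α'(z) = (1/2)·log(2α/(1+z+√((1+z)²+4α²))). -/

import Mathlib

open Complex

/-! With `w = 1 + z` and `S = √(4α² + w²)` we have `χ_α = S/2 + (w/2) log (2α/(w + S))`.
The hypothesis on `z` puts `4α² + w²` in the slit plane, and `w + S` always lies there because
`(w + S)(S - w) = 4α² > 0` while `Re S ≥ 0`; so both principal branches are holomorphic where
they are used and the chain rule applies. Since `(w + S)' = (w + S)/S`, the logarithmic term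
contributes `-w/(2S)`, which cancels `S'/2 = w/(2S)`. -/

noncomputable def csqrt (z : ℂ) : ℂ := z ^ (1 / 2 : ℂ)

noncomputable def chi (α : ℝ) (z : ℂ) : ℂ :=
  (1 / 2 : ℂ) * csqrt (4 * (α : ℂ) ^ 2 + (1 + z) ^ 2) +
    (1 + z) / 2 * Complex.log (2 * (α : ℂ) / (1 + z + csqrt (4 * (α : ℂ) ^ 2 + (1 + z) ^ 2)))

lemma csqrt_mul_self (u : ℂ) : csqrt u * csqrt u = u := by
  rw [← sq, csqrt, one_div]
  exact cpow_ofNat_inv_pow u 2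

lemma csqrt_re_nonneg (u : ℂ) : 0 ≤ (csqrt u).re := by
  rcases eq_or_ne u 0 with rfl | hu
  · simp [csqrt]
  rw [csqrt, cpow_def_of_ne_zero hu, exp_re]
  refine mul_nonneg (Real.exp_pos _).le (Real.cos_nonneg_of_mem_Icc ⟨?_, ?_⟩)
  all_goals
    simp only [mul_im, log_re, log_im, one_div, inv_re, inv_im]
    norm_num
    linarith [neg_pi_lt_arg u, arg_le_pi u]

lemma hasDerivAt_csqrt {u : ℂ} (hu : u ∈ slitPlane) :
    HasDerivAt csqrt (1 / (2 * csqrt u)) u := by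
  refine (hasStrictDerivAt_cpow_const (c := 1 / 2) hu).hasDerivAt.congr_deriv ?_
  rw [show (1 / 2 : ℂ) - 1 = -(1 / 2) by norm_num, cpow_neg, csqrt]
  ring

lemma ofReal_div_mem_slitPlane {a : ℝ} (ha : 0 < a) {v : ℂ} (hv : v ∈ slitPlane) :
    (a : ℂ) / v ∈ slitPlane := by
  have hN : 0 < normSq v := normSq_pos.2 (slitPlane_ne_zero hv)
  rw [mem_slitPlane_iff] at hv ⊢
  rw [div_eq_mul_inv, re_ofReal_mul, im_ofReal_mul, inv_re, inv_im]
  rcases hv with hre | him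
  · exact Or.inl (by positivity)
  · exact Or.inr (mul_ne_zero ha.ne' (div_ne_zero (neg_ne_zero.2 him) hN.ne'))

lemma ofReal_add_sq_mem_slitPlane {c : ℝ} (hc : 0 < c) {w : ℂ}
    (hw : ¬ (w.re = 0 ∧ c ≤ w.im ^ 2)) : (c : ℂ) + w ^ 2 ∈ slitPlane := by
  rw [mem_slitPlane_iff]
  by_contra! h
  obtain ⟨hre, him⟩ := h
  simp only [add_re, add_im, ofReal_re, ofReal_im, sq, mul_re, mul_im] at hre him
  by_cases hw0 : w.re = 0
  · exact hw ⟨hw0, by rw [hw0] at hre; nlinarith⟩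
  · have him0 : w.im = 0 := by
      rcases mul_eq_zero.mp (by linarith : w.re * w.im = 0) with h | h
      exacts [absurd h hw0, h]
    rw [him0] at hre
    nlinarith

lemma add_csqrt_ofReal_add_sq_mem_slitPlane {c : ℝ} (hc : 0 < c) (w : ℂ) :
    w + csqrt (c + w ^ 2) ∈ slitPlane := by
  set S := csqrt (c + w ^ 2)
  set v := w + S
  -- if `v` were a nonpositive real, `Re (v (2S - v)) = c > 0` would force `Re S < 0`
  have hcv : v * (2 * S - v) = c := by linear_combination csqrt_mul_self (c + w ^ 2)
  rw [mem_slitPlane_iff]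
  by_contra! h
  obtain ⟨hre, him⟩ := h
  have hcv_re := congrArg re hcv
  simp only [mul_re, mul_im, sub_re, sub_im, re_ofNat, im_ofNat, him, ofReal_re, zero_mul,
    sub_zero] at hcv_re
  nlinarith [csqrt_re_nonneg (c + w ^ 2)]

noncomputable def chiCore (c a w : ℂ) : ℂ :=
  (1 / 2 : ℂ) * csqrt (c + w ^ 2) + w / 2 * log (a / (w + csqrt (c + w ^ 2)))

lemma hasDerivAt_chiCore {c a w : ℂ} (hu : c + w ^ 2 ∈ slitPlane)
    (hv : a / (w + csqrt (c + w ^ 2)) ∈ slitPlane) :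
    HasDerivAt (chiCore c a) ((1 / 2 : ℂ) * log (a / (w + csqrt (c + w ^ 2)))) w := by
  set S := csqrt (c + w ^ 2) with hS_def
  have hS : S ≠ 0 := fun h ↦
    slitPlane_ne_zero hu (by rw [← csqrt_mul_self (c + w ^ 2)]; simp [S, h])
  have hwS : w + S ≠ 0 := fun h ↦ zero_notMem_slitPlane (by simp [h] at hv)
  have ha : a ≠ 0 := fun h ↦ zero_notMem_slitPlane (by simp [h] at hv)
  have hsqrt : HasDerivAt (fun w ↦ csqrt (c + w ^ 2)) (w / S) w := by
    refine ((hasDerivAt_csqrt hu).comp w ((hasDerivAt_pow 2 w).const_add c)).congr_deriv ?_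
    simp only [← hS_def]
    field_simp
    norm_num
  have hlog : HasDerivAt (fun w ↦ log (a / (w + csqrt (c + w ^ 2)))) (-1 / S) w := by
    refine (((hasDerivAt_const w a).fun_div ((hasDerivAt_id' w).fun_add hsqrt) hwS).clog
      hv).congr_deriv ?_
    simp only [← hS_def]
    field_simp
    ring
  refine ((hsqrt.const_mul (1 / 2 : ℂ)).fun_add
    (((hasDerivAt_id' w).div_const 2).fun_mul hlog)).congr_deriv ?_
  field_simp
  ring

theorem chi_hasDerivAt (α : ℝ) (hα : 0 < α) (z : ℂ)
    (hz : ¬ ∃ y : ℝ, z = -1 + Complex.I * (y : ℂ) ∧ 2 * α ≤ |y|) :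
    HasDerivAt (chi α)
      ((1 / 2 : ℂ) *
        Complex.log (2 * (α : ℂ) / (1 + z + csqrt ((1 + z) ^ 2 + 4 * (α : ℂ) ^ 2)))) z := by
  have hc : ((4 * α ^ 2 : ℝ) : ℂ) = 4 * (α : ℂ) ^ 2 := by push_cast; rfl
  have hw : ¬ ((1 + z).re = 0 ∧ 4 * α ^ 2 ≤ (1 + z).im ^ 2) := by
    rintro ⟨hre, him⟩
    refine hz ⟨z.im, Complex.ext (by simp at hre ⊢; linarith) (by simp), ?_⟩
    have hsq : (2 * α) ^ 2 ≤ z.im ^ 2 := by simp at him; linarith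
    simpa [abs_of_pos hα] using sq_le_sq.mp hsq
  have hu := ofReal_add_sq_mem_slitPlane (by positivity) hw
  have hv := ofReal_div_mem_slitPlane (by positivity : 0 < 2 * α)
    (add_csqrt_ofReal_add_sq_mem_slitPlane (by positivity : 0 < 4 * α ^ 2) (1 + z))
  rw [hc] at hu hv
  push_cast at hv
  rw [add_comm ((1 + z) ^ 2)]
  exact (hasDerivAt_chiCore hu hv).comp_const_add 1 z
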